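/- For n > 2, the twisted commutator [x⁻_{α_{2n}}(1), x⁻_{α_{1n}}(1)]_s = x⁻_{α_{2n}}(1)·x⁻_{α_{1n}}(1) − s·x⁻_{α_{1n}}(1)·x⁻_{α_{2n}}(1) vanishes in 𝒰. -/
import Mathlib


noncomputable section

set_option synthInstance.maxHeartbeats 1000000
set_option maxHeartbeats 1000000

open scoped TensorProduct

/-- The base field `K = ℚ(r^{1/2}, s^{1/2})`. -/
abbrev Kf : Type := FractionRing (MvPolynomial (Fin 2) ℚ)

/-- `r^{1/2}`. -/
def rh : Kf := algebraMap (MvPolynomial (Fin 2) ℚ) Kf (MvPolynomial.X 0)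
/-- `s^{1/2}`. -/
def sh : Kf := algebraMap (MvPolynomial (Fin 2) ℚ) Kf (MvPolynomial.X 1)
/-- `r = (r^{1/2})^2`. -/
def rr : Kf := rh ^ 2
/-- `s = (s^{1/2})^2`. -/
def ss : Kf := sh ^ 2

/-- the `q`-twisted commutator `[x, y]_q = x y - q (y x)`. -/
def qbr {A : Type} [Ring A] [Algebra Kf A] (q : Kf) (x y : A) : A := x * y - q • (y * x)

/-- integer powers using a chosen generator and its chosen inverse. -/
def zpw {A : Type} [Monoid A] (x xi : A) (k : ℤ) : A :=
  if 0 ≤ k then x ^ k.toNat else xi ^ (-k).toNat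

/-- left-nested twisted bracket `[⋯[[g a, g (a+1)]_q, g (a+2)]_q, …, g (b-1)]_q`. -/
def nestL {A : Type} [Ring A] [Algebra Kf A] (q : Kf) (g : ℕ → A) (a : ℕ) : ℕ → A
  | 0 => 0
  | b+1 => if b ≤ a then g a else qbr q (nestL q g a b) (g b)

/-- right-nested twisted bracket `[g (b-1), …, [g (a+2), [g (a+1), g a]_q]_q ⋯]_q`. -/
def nestR {A : Type} [Ring A] [Algebra Kf A] (q : Kf) (g : ℕ → A) (a : ℕ) : ℕ → A
  | 0 => 0
  | b+1 => if b ≤ a then g a else qbr q (g b) (nestR q g a b)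

/-- Coefficients of `exp (∑_{ℓ ≥ 1} c ℓ z^ℓ)`, computed by the Newton-type recursion
`m E_m = ∑_{ℓ=1}^{m} ℓ · (c ℓ) · E_{m-ℓ}` (valid whenever the `c ℓ` pairwise commute). -/
def expCoeff {A : Type} [Ring A] [Algebra Kf A] (c : ℕ → A) : ℕ → A
  | 0 => 1
  | m+1 => (((m+1 : ℕ) : Kf))⁻¹ •
      ∑ l ∈ Finset.range (m+1), (((l+1 : ℕ) : Kf)) • (c (l+1) * expCoeff c (m - l))
  termination_by m => m
  decreasing_by omega

/-- `(ε_j, α_i)` for `j ∈ {1,…,n}`, `i ∈ I₀ = {0,…,n-1}`. -/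
def epsAlpha (n j i : ℕ) : ℤ :=
  if i = 0 then (if j = n then 1 else 0) - (if j = 1 then 1 else 0)
  else (if j = i then 1 else 0) - (if j = i + 1 then 1 else 0)

/-- `⟨ω_i', ω_j⟩` for `i, j ∈ I₀`:  `r^{(ε_j,α_i)} s^{(ε_{j+1},α_i)}` for `j ∈ I`, and
`r^{-(ε_{i+1},α₀)} s^{(ε₁,α_i)}` for `j = 0`. -/
def pairO (n i j : ℕ) : Kf :=
  if j = 0 then rr ^ (-(epsAlpha n (i+1) 0)) * ss ^ (epsAlpha n 1 i)
  else rr ^ (epsAlpha n j i) * ss ^ (epsAlpha n (j+1) i)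

/-- the coefficient in relation (A3): `s^{(ε_j,α_i)} r^{(ε_{j+1},α_i)}` resp.
`s^{-(ε_{i+1},α₀)} r^{(ε₁,α_i)}`. -/
def pairO' (n i j : ℕ) : Kf :=
  if j = 0 then ss ^ (-(epsAlpha n (i+1) 0)) * rr ^ (epsAlpha n 1 i)
  else ss ^ (epsAlpha n j i) * rr ^ (epsAlpha n (j+1) i)

/-- `⟨i,j⟩^{1/2} = r^{(ε_j,α_i)/2} s^{(ε_{j+1},α_i)/2}` for `i, j ∈ I` (translation invariant). -/
def prH (i j : ℤ) : Kf :=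
  if j = i then rh * sh⁻¹ else if j = i + 1 then rh⁻¹ else if j = i - 1 then sh else 1

/-- the structure constants `⟨i,j⟩ = r^{(ε_j,α_i)} s^{(ε_{j+1},α_i)}` for `i, j ∈ I`. -/
def pr (i j : ℤ) : Kf := (prH i j) ^ 2

/-- the Cartan matrix of `sl_n` (entries only depend on the difference of indices). -/
def aC (i j : ℤ) : ℤ := if i = j then 2 else if (i - j).natAbs = 1 then -1 else 0

/-- the scalar `(rs)^{|ℓ|/2} (⟨i,i⟩^{ℓ a_{ij}/2} - ⟨i,i⟩^{-ℓ a_{ij}/2}) / (d (r-s))`. -/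
def braceC (i j : ℤ) (l : ℤ) (d : ℤ) : Kf :=
  ((rh * sh) ^ |l| * ((rh * sh⁻¹) ^ (l * aC i j) - (rh * sh⁻¹) ^ (-(l * aC i j)))) /
    ((d : Kf) * (rr - ss))
/-! ## The two-parameter quantum affine algebra `U_{r,s}(̂sl_n)` (Definition 2.1) -/

/-- the Chevalley-Kac-Lusztig generators of `U_{r,s}(̂sl_n)`. -/
inductive UGen (n : ℕ) : Type
  | e  : Fin n → UGen n
  | f  : Fin n → UGen n
  | w  : Fin n → UGen n
  | wi : Fin n → UGen n
  | w' : Fin n → UGen n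
  | w'i : Fin n → UGen n
  | gh : UGen n
  | ghi : UGen n
  | g'h : UGen n
  | g'hi : UGen n
  | dd : UGen n
  | ddi : UGen n
  | dd' : UGen n
  | dd'i : UGen n

namespace UGen

/-- toral (group-like) generators. -/
def toral {n : ℕ} : UGen n → Prop
  | .e _ => False
  | .f _ => False
  | _ => True

/-- the generators `γ^{±1/2}, γ'^{±1/2}`. -/
def isGamma {n : ℕ} : UGen n → Prop
  | .gh => True
  | .ghi => True
  | .g'h => True
  | .g'hi => True
  | _ => False

/-- mutually inverse pairs of generators. -/
def invPair {n : ℕ} : UGen n → UGen n → Prop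
  | .w i, .wi j => i = j
  | .wi i, .w j => i = j
  | .w' i, .w'i j => i = j
  | .w'i i, .w' j => i = j
  | .gh, .ghi => True
  | .ghi, .gh => True
  | .g'h, .g'hi => True
  | .g'hi, .g'h => True
  | .dd, .ddi => True
  | .ddi, .dd => True
  | .dd', .dd'i => True
  | .dd'i, .dd' => True
  | _, _ => False

end UGen

namespace Upre

variable (n : ℕ)

/-- the free algebra on the generators. -/
abbrev F (n : ℕ) := FreeAlgebra Kf (UGen n)

def E (i : Fin n) : F n := FreeAlgebra.ι Kf (UGen.e i)
def Fm (i : Fin n) : F n := FreeAlgebra.ι Kf (UGen.f i)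
def W (i : Fin n) : F n := FreeAlgebra.ι Kf (UGen.w i)
def W' (i : Fin n) : F n := FreeAlgebra.ι Kf (UGen.w' i)
def Gh : F n := FreeAlgebra.ι Kf UGen.gh
def G'h : F n := FreeAlgebra.ι Kf UGen.g'h
def Dd : F n := FreeAlgebra.ι Kf UGen.dd
def Dd' : F n := FreeAlgebra.ι Kf UGen.dd'

end Upre

/-- adjacency in the affine Dynkin diagram of type `A_{n-1}^{(1)}` (a cycle on `I₀`). -/
def affAdj (n : ℕ) (i j : Fin n) : Prop :=
  (i.val + 1) % n = j.val ∨ (j.val + 1) % n = i.val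

open Upre in
/-- the defining relations (A1)–(A7) of `U_{r,s}(̂sl_n)`. -/
inductive URel (n : ℕ) : Upre.F n → Upre.F n → Prop
  | inv (g h : UGen n) (hp : g.invPair h) :
      URel n (FreeAlgebra.ι Kf g * FreeAlgebra.ι Kf h) 1
  | toralComm (g h : UGen n) (hg : g.toral) (hh : h.toral) :
      URel n (FreeAlgebra.ι Kf g * FreeAlgebra.ι Kf h) (FreeAlgebra.ι Kf h * FreeAlgebra.ι Kf g)
  | gammaCentral (c g : UGen n) (hc : c.isGamma) :
      URel n (FreeAlgebra.ι Kf c * FreeAlgebra.ι Kf g) (FreeAlgebra.ι Kf g * FreeAlgebra.ι Kf c)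
  | gammaProd : URel n (Gh n * Gh n) (((List.finRange n).map (W n)).prod)
  | gamma'Prod : URel n (G'h n * G'h n) (((List.finRange n).map (W' n)).prod)
  | gammaGamma' : URel n (Gh n * Gh n * (G'h n * G'h n)) ((rr * ss) • 1)
  -- (A2)
  | dE (i : Fin n) : URel n (Dd n * E n i) ((if i.val = 0 then rr else 1) • (E n i * Dd n))
  | dF (i : Fin n) : URel n (Dd n * Fm n i) ((if i.val = 0 then rr⁻¹ else 1) • (Fm n i * Dd n))
  | wE (i j : Fin n) : URel n (W n j * E n i) (pairO n i j • (E n i * W n j))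
  | wF (i j : Fin n) : URel n (W n j * Fm n i) ((pairO n i j)⁻¹ • (Fm n i * W n j))
  -- (A3)
  | d'E (i : Fin n) : URel n (Dd' n * E n i) ((if i.val = 0 then ss else 1) • (E n i * Dd' n))
  | d'F (i : Fin n) : URel n (Dd' n * Fm n i) ((if i.val = 0 then ss⁻¹ else 1) • (Fm n i * Dd' n))
  | w'E (i j : Fin n) : URel n (W' n j * E n i) (pairO' n i j • (E n i * W' n j))
  | w'F (i j : Fin n) : URel n (W' n j * Fm n i) ((pairO' n i j)⁻¹ • (Fm n i * W' n j))
  -- (A4)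
  | ef (i j : Fin n) : URel n (E n i * Fm n j - Fm n j * E n i)
      (if i = j then (rr - ss)⁻¹ • (W n i - W' n i) else 0)
  -- (A5)
  | ee (i j : Fin n) (hne : i ≠ j) (h : ¬ affAdj n i j) : URel n (E n i * E n j) (E n j * E n i)
  | ff (i j : Fin n) (hne : i ≠ j) (h : ¬ affAdj n i j) :
      URel n (Fm n i * Fm n j) (Fm n j * Fm n i)
  -- (A6)
  | se1 (i j : Fin n) (h : j.val = (i.val + 1) % n) :
      URel n (E n i * E n i * E n j - (rr + ss) • (E n i * E n j * E n i)
      + (rr * ss) • (E n j * (E n i * E n i))) 0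
  | se2 (i j : Fin n) (h : j.val = (i.val + 1) % n) :
      URel n (E n i * (E n j * E n j)
      - (rr + ss) • (E n j * E n i * E n j)
      + (rr * ss) • (E n j * E n j * E n i)) 0
  -- (A7)
  | sf1 (i j : Fin n) (h : j.val = (i.val + 1) % n) :
      URel n (Fm n i * Fm n i * Fm n j
      - (rr⁻¹ + ss⁻¹) • (Fm n i * Fm n j * Fm n i)
      + (rr * ss)⁻¹ • (Fm n j * (Fm n i * Fm n i))) 0
  | sf2 (i j : Fin n) (h : j.val = (i.val + 1) % n) :
      URel n (Fm n i * (Fm n j * Fm n j)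
      - (rr⁻¹ + ss⁻¹) • (Fm n j * Fm n i * Fm n j)
      + (rr * ss)⁻¹ • (Fm n j * Fm n j * Fm n i)) 0

/-- the two-parameter quantum affine algebra `U_{r,s}(̂sl_n)` of Definition 2.1. -/
abbrev Uq (n : ℕ) := RingQuot (URel n)

namespace Uq

variable (n : ℕ)

/-- the canonical projection. -/
def mk : Upre.F n →ₐ[Kf] Uq n := RingQuot.mkAlgHom Kf (URel n)

def ue (i : Fin n) : Uq n := mk n (Upre.E n i)
def uf (i : Fin n) : Uq n := mk n (Upre.Fm n i)
def uw (i : Fin n) : Uq n := mk n (Upre.W n i)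
def uwi (i : Fin n) : Uq n := mk n (FreeAlgebra.ι Kf (UGen.wi i))
def uw' (i : Fin n) : Uq n := mk n (Upre.W' n i)
def uw'i (i : Fin n) : Uq n := mk n (FreeAlgebra.ι Kf (UGen.w'i i))
def ugh : Uq n := mk n (Upre.Gh n)
def ughi : Uq n := mk n (FreeAlgebra.ι Kf UGen.ghi)
def ug'h : Uq n := mk n (Upre.G'h n)
def ug'hi : Uq n := mk n (FreeAlgebra.ι Kf UGen.g'hi)
def ud : Uq n := mk n (Upre.Dd n)
def udi : Uq n := mk n (FreeAlgebra.ι Kf UGen.ddi)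
def ud' : Uq n := mk n (Upre.Dd' n)
def ud'i : Uq n := mk n (FreeAlgebra.ι Kf UGen.dd'i)

/-- `γ = (γ^{1/2})²`. -/
def uγ : Uq n := ugh n * ugh n
def uγi : Uq n := ughi n * ughi n
def uγ' : Uq n := ug'h n * ug'h n
def uγ'i : Uq n := ug'hi n * ug'hi n

/-- the positive nilpotent subalgebra `U_{r,s}(̂n)`. -/
def Nplus : Subalgebra Kf (Uq n) := Algebra.adjoin Kf (Set.range (ue n))
/-- the negative nilpotent subalgebra `U_{r,s}(̂n⁻)`. -/
def Nminus : Subalgebra Kf (Uq n) := Algebra.adjoin Kf (Set.range (uf n))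
/-- the toral subalgebra `U⁰`. -/
def Utoral : Subalgebra Kf (Uq n) := Algebra.adjoin Kf
  (Set.range (uw n) ∪ Set.range (uwi n) ∪ Set.range (uw' n) ∪ Set.range (uw'i n) ∪
    {ugh n, ughi n, ug'h n, ug'hi n, ud n, udi n, ud' n, ud'i n})

/-- the Hopf subalgebra `B̂`. -/
def Bhat : Subalgebra Kf (Uq n) := Algebra.adjoin Kf
  (Set.range (ue n) ∪ Set.range (uw n) ∪ Set.range (uwi n) ∪
    {ugh n, ughi n, ud n, udi n})

/-- the Hopf subalgebra `B̂'`. -/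
def Bhat' : Subalgebra Kf (Uq n) := Algebra.adjoin Kf
  (Set.range (uf n) ∪ Set.range (uw' n) ∪ Set.range (uw'i n) ∪
    {ug'h n, ug'hi n, ud' n, ud'i n})

end Uq
/-! ## The Drinfel'd realization `𝒰_{r,s}(̂sl_n)` (Definition 3.1) -/

/-- the Drinfel'd generators. -/
inductive DGen (n : ℕ) : Type
  | xp : Fin (n-1) → ℤ → DGen n
  | xm : Fin (n-1) → ℤ → DGen n
  | am : Fin (n-1) → {l : ℤ // l ≠ 0} → DGen n
  | w : Fin (n-1) → DGen n
  | wi : Fin (n-1) → DGen n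
  | w' : Fin (n-1) → DGen n
  | w'i : Fin (n-1) → DGen n
  | gh : DGen n
  | ghi : DGen n
  | g'h : DGen n
  | g'hi : DGen n
  | dd : DGen n
  | ddi : DGen n
  | dd' : DGen n
  | dd'i : DGen n

namespace DGen

def toral {n : ℕ} : DGen n → Prop
  | .xp _ _ => False
  | .xm _ _ => False
  | .am _ _ => False
  | _ => True

def isGamma {n : ℕ} : DGen n → Prop
  | .gh => True
  | .ghi => True
  | .g'h => True
  | .g'hi => True
  | _ => False

def isOmega {n : ℕ} : DGen n → Prop
  | .w _ => True
  | .wi _ => True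
  | .w' _ => True
  | .w'i _ => True
  | _ => False

def invPair {n : ℕ} : DGen n → DGen n → Prop
  | .w i, .wi j => i = j
  | .wi i, .w j => i = j
  | .w' i, .w'i j => i = j
  | .w'i i, .w' j => i = j
  | .gh, .ghi => True
  | .ghi, .gh => True
  | .g'h, .g'hi => True
  | .g'hi, .g'h => True
  | .dd, .ddi => True
  | .ddi, .dd => True
  | .dd', .dd'i => True
  | .dd'i, .dd' => True
  | _, _ => False

end DGen

namespace Dpre

/-- the free algebra on the Drinfel'd generators. -/
abbrev FD (n : ℕ) := FreeAlgebra Kf (DGen n)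

variable (n : ℕ)

def XP (i : Fin (n-1)) (k : ℤ) : FD n := FreeAlgebra.ι Kf (DGen.xp i k)
def XM (i : Fin (n-1)) (k : ℤ) : FD n := FreeAlgebra.ι Kf (DGen.xm i k)
def Am (i : Fin (n-1)) (l : ℤ) (hl : l ≠ 0) : FD n := FreeAlgebra.ι Kf (DGen.am i ⟨l, hl⟩)
def W (i : Fin (n-1)) : FD n := FreeAlgebra.ι Kf (DGen.w i)
def W' (i : Fin (n-1)) : FD n := FreeAlgebra.ι Kf (DGen.w' i)
def Gh : FD n := FreeAlgebra.ι Kf DGen.gh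
def Ghi : FD n := FreeAlgebra.ι Kf DGen.ghi
def G'h : FD n := FreeAlgebra.ι Kf DGen.g'h
def G'hi : FD n := FreeAlgebra.ι Kf DGen.g'hi
def Dd : FD n := FreeAlgebra.ι Kf DGen.dd
def Dd' : FD n := FreeAlgebra.ι Kf DGen.dd'

/-- `ω_i(m)`, the coefficient of `z^{-m}` in `ω_i exp((r-s) ∑_{ℓ≥1} a_i(ℓ) z^{-ℓ})`. -/
def OmP (i : Fin (n-1)) (m : ℕ) : FD n :=
  W n i * expCoeff (fun l => if hl : (l : ℤ) = 0 then 0 else (rr - ss) • Am n i l hl) m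

/-- `ω_i'(-m)`, the coefficient of `z^{m}` in `ω_i' exp(-(r-s) ∑_{ℓ≥1} a_i(-ℓ) z^{ℓ})`. -/
def OmM (i : Fin (n-1)) (m : ℕ) : FD n :=
  W' n i * expCoeff (fun l => if hl : (-l : ℤ) = 0 then 0 else (-(rr - ss)) • Am n i (-l) hl) m

/-- `ω_i(m)` for `m ∈ ℤ`, with `ω_i(-m) = 0` for `m > 0`. -/
def OmZ (i : Fin (n-1)) (m : ℤ) : FD n := if 0 ≤ m then OmP n i m.toNat else 0

/-- `ω_i'(m)` for `m ∈ ℤ`, with `ω_i'(m) = 0` for `m > 0`. -/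
def OmZ' (i : Fin (n-1)) (m : ℤ) : FD n := if m ≤ 0 then OmM n i (-m).toNat else 0

end Dpre

open Dpre in
/-- the defining relations (D1)–(D9) of the Drinfel'd realization. -/
inductive DRel (n : ℕ) : Dpre.FD n → Dpre.FD n → Prop
  -- (D1)
  | inv (g h : DGen n) (hp : g.invPair h) :
      DRel n (FreeAlgebra.ι Kf g * FreeAlgebra.ι Kf h) 1
  | toralComm (g h : DGen n) (hg : g.toral) (hh : h.toral) :
      DRel n (FreeAlgebra.ι Kf g * FreeAlgebra.ι Kf h) (FreeAlgebra.ι Kf h * FreeAlgebra.ι Kf g)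
  | gammaCentral (c g : DGen n) (hc : c.isGamma) :
      DRel n (FreeAlgebra.ι Kf c * FreeAlgebra.ι Kf g) (FreeAlgebra.ι Kf g * FreeAlgebra.ι Kf c)
  | gammaGamma' : DRel n (Gh n * Gh n * (G'h n * G'h n)) ((rr * ss) • 1)
  -- (D2)
  | d2 (i j : Fin (n-1)) (l l' : ℤ) (hl : l ≠ 0) (hl' : l' ≠ 0) :
      DRel n (Am n i l hl * Am n j l' hl' - Am n j l' hl' * Am n i l hl)
        (if l + l' = 0 then
          (braceC i j l |l| * (rr - ss)⁻¹) • (zpw (Gh n) (Ghi n) (2*|l|) - zpw (G'h n) (G'hi n) (2*|l|))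
         else 0)
  -- (D3)
  | d3 (i : Fin (n-1)) (l : ℤ) (hl : l ≠ 0) (g : DGen n) (hg : g.isOmega) :
      DRel n (Am n i l hl * FreeAlgebra.ι Kf g) (FreeAlgebra.ι Kf g * Am n i l hl)
  -- (D4)
  | d4xp (i : Fin (n-1)) (k : ℤ) : DRel n (Dd n * XP n i k) (rr ^ k • (XP n i k * Dd n))
  | d4xm (i : Fin (n-1)) (k : ℤ) : DRel n (Dd n * XM n i k) (rr ^ k • (XM n i k * Dd n))
  | d4a (i : Fin (n-1)) (l : ℤ) (hl : l ≠ 0) :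
      DRel n (Dd n * Am n i l hl) (rr ^ l • (Am n i l hl * Dd n))
  | d4'xp (i : Fin (n-1)) (k : ℤ) : DRel n (Dd' n * XP n i k) (ss ^ k • (XP n i k * Dd' n))
  | d4'xm (i : Fin (n-1)) (k : ℤ) : DRel n (Dd' n * XM n i k) (ss ^ k • (XM n i k * Dd' n))
  | d4'a (i : Fin (n-1)) (l : ℤ) (hl : l ≠ 0) :
      DRel n (Dd' n * Am n i l hl) (ss ^ l • (Am n i l hl * Dd' n))
  -- (D5)
  | d5wp (i j : Fin (n-1)) (k : ℤ) :
      DRel n (W n i * XP n j k) (pr j i • (XP n j k * W n i))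
  | d5wm (i j : Fin (n-1)) (k : ℤ) :
      DRel n (W n i * XM n j k) ((pr j i)⁻¹ • (XM n j k * W n i))
  | d5w'p (i j : Fin (n-1)) (k : ℤ) :
      DRel n (W' n i * XP n j k) ((pr i j)⁻¹ • (XP n j k * W' n i))
  | d5w'm (i j : Fin (n-1)) (k : ℤ) :
      DRel n (W' n i * XM n j k) (pr i j • (XM n j k * W' n i))
  -- (D6)
  | d6np (i j : Fin (n-1)) (l k : ℤ) (hl : l < 0) :
      DRel n (Am n i l hl.ne * XP n j k - XP n j k * Am n i l hl.ne)
        (braceC i j l l • (zpw (Gh n) (Ghi n) l * XP n j (l+k)))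
  | d6nm (i j : Fin (n-1)) (l k : ℤ) (hl : l < 0) :
      DRel n (Am n i l hl.ne * XM n j k - XM n j k * Am n i l hl.ne)
        ((-(braceC i j l l)) • (zpw (Gh n) (Ghi n) (-l) * XM n j (l+k)))
  | d6pp (i j : Fin (n-1)) (l k : ℤ) (hl : 0 < l) :
      DRel n (Am n i l hl.ne' * XP n j k - XP n j k * Am n i l hl.ne')
        (braceC i j l l • (zpw (G'h n) (G'hi n) l * XP n j (l+k)))
  | d6pm (i j : Fin (n-1)) (l k : ℤ) (hl : 0 < l) :
      DRel n (Am n i l hl.ne' * XM n j k - XM n j k * Am n i l hl.ne')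
        ((-(braceC i j l l)) • (zpw (G'h n) (G'hi n) (-l) * XM n j (l+k)))
  -- (D7)
  | d7p (i j : Fin (n-1)) (k k' : ℤ) :
      DRel n (XP n i (k+1) * XP n j k' - pr j i • (XP n j k' * XP n i (k+1))
          + (prH j i * (prH i j)⁻¹) • (XP n j (k'+1) * XP n i k - pr i j • (XP n i k * XP n j (k'+1)))) 0
  | d7m (i j : Fin (n-1)) (k k' : ℤ) :
      DRel n (XM n i (k+1) * XM n j k' - (pr j i)⁻¹ • (XM n j k' * XM n i (k+1))
          + ((prH j i)⁻¹ * prH i j) • (XM n j (k'+1) * XM n i k - (pr i j)⁻¹ • (XM n i k * XM n j (k'+1)))) 0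
  -- (D8)
  | d8 (i j : Fin (n-1)) (k k' : ℤ) :
      DRel n (XP n i k * XM n j k' - XM n j k' * XP n i k)
        (if i = j then
          (rr - ss)⁻¹ • (zpw (G'h n) (G'hi n) (-2*k) * zpw (Gh n) (Ghi n) (-(k+k')) * OmZ n i (k+k')
            - zpw (Gh n) (Ghi n) (2*k') * zpw (G'h n) (G'hi n) (k+k') * OmZ' n i (k+k'))
         else 0)
  -- (D9₁)
  | d91p (i j : Fin (n-1)) (h : aC i j = 0) (m k : ℤ) :
      DRel n (XP n i m * XP n j k) (XP n j k * XP n i m)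
  | d91m (i j : Fin (n-1)) (h : aC i j = 0) (m k : ℤ) :
      DRel n (XM n i m * XM n j k) (XM n j k * XM n i m)
  -- (D9₂)
  | d92p (i j : Fin (n-1)) (h : aC i j = -1) (hij : (i : ℕ) < j) (m1 m2 k : ℤ) :
      DRel n ((XP n i m1 * XP n i m2 * XP n j k - (rr + ss) • (XP n i m1 * XP n j k * XP n i m2)
          + (rr * ss) • (XP n j k * XP n i m1 * XP n i m2))
        + (XP n i m2 * XP n i m1 * XP n j k - (rr + ss) • (XP n i m2 * XP n j k * XP n i m1)
          + (rr * ss) • (XP n j k * XP n i m2 * XP n i m1))) 0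
  | d92m (i j : Fin (n-1)) (h : aC i j = -1) (hij : (i : ℕ) < j) (m1 m2 k : ℤ) :
      DRel n ((XM n i m1 * XM n i m2 * XM n j k - (rr⁻¹ + ss⁻¹) • (XM n i m1 * XM n j k * XM n i m2)
          + (rr * ss)⁻¹ • (XM n j k * XM n i m1 * XM n i m2))
        + (XM n i m2 * XM n i m1 * XM n j k - (rr⁻¹ + ss⁻¹) • (XM n i m2 * XM n j k * XM n i m1)
          + (rr * ss)⁻¹ • (XM n j k * XM n i m2 * XM n i m1))) 0
  -- (D9₃)
  | d93p (i j : Fin (n-1)) (h : aC i j = -1) (hij : (j : ℕ) < i) (m1 m2 k : ℤ) :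
      DRel n ((XP n i m1 * XP n i m2 * XP n j k - (rr⁻¹ + ss⁻¹) • (XP n i m1 * XP n j k * XP n i m2)
          + (rr * ss)⁻¹ • (XP n j k * XP n i m1 * XP n i m2))
        + (XP n i m2 * XP n i m1 * XP n j k - (rr⁻¹ + ss⁻¹) • (XP n i m2 * XP n j k * XP n i m1)
          + (rr * ss)⁻¹ • (XP n j k * XP n i m2 * XP n i m1))) 0
  | d93m (i j : Fin (n-1)) (h : aC i j = -1) (hij : (j : ℕ) < i) (m1 m2 k : ℤ) :
      DRel n ((XM n i m1 * XM n i m2 * XM n j k - (rr + ss) • (XM n i m1 * XM n j k * XM n i m2)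
          + (rr * ss) • (XM n j k * XM n i m1 * XM n i m2))
        + (XM n i m2 * XM n i m1 * XM n j k - (rr + ss) • (XM n i m2 * XM n j k * XM n i m1)
          + (rr * ss) • (XM n j k * XM n i m2 * XM n i m1))) 0

/-- the Drinfel'd realization `𝒰_{r,s}(̂sl_n)`. -/
abbrev DU (n : ℕ) := RingQuot (DRel n)

namespace DU

variable (n : ℕ)

/-- the canonical projection. -/
def mk : Dpre.FD n →ₐ[Kf] DU n := RingQuot.mkAlgHom Kf (DRel n)

def uxp (i : Fin (n-1)) (k : ℤ) : DU n := mk n (Dpre.XP n i k)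
def uxm (i : Fin (n-1)) (k : ℤ) : DU n := mk n (Dpre.XM n i k)
def ua (i : Fin (n-1)) (l : ℤ) (hl : l ≠ 0) : DU n := mk n (Dpre.Am n i l hl)
def uw (i : Fin (n-1)) : DU n := mk n (Dpre.W n i)
def uwi (i : Fin (n-1)) : DU n := mk n (FreeAlgebra.ι Kf (DGen.wi i))
def uw' (i : Fin (n-1)) : DU n := mk n (Dpre.W' n i)
def uw'i (i : Fin (n-1)) : DU n := mk n (FreeAlgebra.ι Kf (DGen.w'i i))
def ugh : DU n := mk n (Dpre.Gh n)
def ughi : DU n := mk n (Dpre.Ghi n)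
def ug'h : DU n := mk n (Dpre.G'h n)
def ug'hi : DU n := mk n (Dpre.G'hi n)
def ud : DU n := mk n (Dpre.Dd n)
def udi : DU n := mk n (FreeAlgebra.ι Kf DGen.ddi)
def ud' : DU n := mk n (Dpre.Dd' n)
def ud'i : DU n := mk n (FreeAlgebra.ι Kf DGen.dd'i)

def uγ : DU n := ugh n * ugh n
def uγi : DU n := ughi n * ughi n
def uγ' : DU n := ug'h n * ug'h n
def uγ'i : DU n := ug'hi n * ug'hi n

/-- `ω_i(m)` in `𝒰`. -/
def uOm (i : Fin (n-1)) (m : ℕ) : DU n := mk n (Dpre.OmP n i m)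
/-- `ω_i'(-m)` in `𝒰`. -/
def uOm' (i : Fin (n-1)) (m : ℕ) : DU n := mk n (Dpre.OmM n i m)

/-- `x_t^+(k)` indexed by the actual index `t ∈ {1, …, n-1}` (junk value `0` otherwise). -/
def xg (t : ℕ) (k : ℤ) : DU n :=
  if h : 1 ≤ t ∧ t - 1 < n - 1 then uxp n ⟨t-1, h.2⟩ k else 0

/-- `x_t^-(k)` indexed by the actual index `t ∈ {1, …, n-1}` (junk value `0` otherwise). -/
def xmg (t : ℕ) (k : ℤ) : DU n :=
  if h : 1 ≤ t ∧ t - 1 < n - 1 then uxm n ⟨t-1, h.2⟩ k else 0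

/-- the quantum affine root vector `x^+_{α_{ab}}(k)`
 `= [⋯[[x_a^+(k), x_{a+1}^+(0)]_r, x_{a+2}^+(0)]_r, …, x_{b-1}^+(0)]_r`. -/
def xRootP (a : ℕ) (k : ℤ) (b : ℕ) : DU n :=
  nestL rr (fun t => if t = a then xg n t k else xg n t 0) a b

/-- the quantum affine root vector `x^-_{α_{ab}}(k)`
 `= [x_{b-1}^-(0), …, [x_{a+2}^-(0), [x_{a+1}^-(0), x_a^-(k)]_s]_s ⋯]_s`. -/
def xRootM (a : ℕ) (k : ℤ) (b : ℕ) : DU n :=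
  nestR ss (fun t => if t = a then xmg n t k else xmg n t 0) a b

/-- `ω_t` indexed by the actual index `t ∈ {1, …, n-1}`. -/
def wg (t : ℕ) : DU n := if h : 1 ≤ t ∧ t - 1 < n - 1 then uw n ⟨t-1, h.2⟩ else 1
/-- `ω_t⁻¹` indexed by the actual index. -/
def wgi (t : ℕ) : DU n := if h : 1 ≤ t ∧ t - 1 < n - 1 then uwi n ⟨t-1, h.2⟩ else 1
/-- `ω_t'` indexed by the actual index. -/
def w'g (t : ℕ) : DU n := if h : 1 ≤ t ∧ t - 1 < n - 1 then uw' n ⟨t-1, h.2⟩ else 1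
/-- `ω_t'⁻¹` indexed by the actual index. -/
def w'gi (t : ℕ) : DU n := if h : 1 ≤ t ∧ t - 1 < n - 1 then uw'i n ⟨t-1, h.2⟩ else 1
/-- `a_t(ℓ)` indexed by the actual index. -/
def ag (t : ℕ) (l : ℤ) (hl : l ≠ 0) : DU n :=
  if h : 1 ≤ t ∧ t - 1 < n - 1 then ua n ⟨t-1, h.2⟩ l hl else 0

/-- `ω_θ = ω_1 ⋯ ω_{n-1}`. -/
def uωθ : DU n := ((List.finRange (n-1)).map (uw n)).prod
def uωθi : DU n := ((List.finRange (n-1)).map (uwi n)).prod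
def uωθ' : DU n := ((List.finRange (n-1)).map (uw' n)).prod
def uωθ'i : DU n := ((List.finRange (n-1)).map (uw'i n)).prod

/-- `E_0 = x_θ^-(1) ⋅ γ'^{-1} ω_θ^{-1}`. -/
def E0 : DU n := xRootM n 1 1 n * (uγ'i n * uωθi n)
/-- `F_0 = γ^{-1} ω_θ'^{-1} ⋅ x_θ^+(-1)`. -/
def F0 : DU n := (uγi n * uωθ'i n) * xRootP n 1 (-1) n

/-- `E_i = x_i^+(0)`, `F_i = x_i^-(0)` for `i ∈ I`, together with `E_0`, `F_0`;
indexed by `I₀ = {0, 1, …, n-1}`. -/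
def Egen (t : ℕ) : DU n := if t = 0 then E0 n else xg n t 0
def Fgen (t : ℕ) : DU n := if t = 0 then F0 n else xmg n t 0

/-- the subalgebra `𝒰'` generated by the `E_i, F_i (i ∈ I₀)`, the toral generators and
`γ^{±1/2}, γ'^{±1/2}, D^{±1}, D'^{±1}`. -/
def Uprime : Subalgebra Kf (DU n) := Algebra.adjoin Kf
  ((Egen n '' (Set.Iio n)) ∪ (Fgen n '' (Set.Iio n)) ∪
    Set.range (uw n) ∪ Set.range (uwi n) ∪ Set.range (uw' n) ∪ Set.range (uw'i n) ∪
    {ugh n, ughi n, ug'h n, ug'hi n, ud n, udi n, ud' n, ud'i n})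

/-- the subalgebra `𝒰(ñ)` generated by all `x_i^+(k)`. -/
def DNplus : Subalgebra Kf (DU n) := Algebra.adjoin Kf
  {u | ∃ (i : Fin (n-1)) (k : ℤ), u = uxp n i k}

/-- the subalgebra `𝒰(ñ⁻)` generated by all `x_i^-(k)`. -/
def DNminus : Subalgebra Kf (DU n) := Algebra.adjoin Kf
  {u | ∃ (i : Fin (n-1)) (k : ℤ), u = uxm n i k}

end DU


/-! ## Auxiliary material for the proof of `stmt19` -/

section Stmt19Aux

open DU

/-- injectivity of the structure map of the fraction field. -/
lemma kf_inj : Function.Injective (algebraMap (MvPolynomial (Fin 2) ℚ) Kf) :=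
  IsFractionRing.injective _ _

lemma kf_poly_ne {p : MvPolynomial (Fin 2) ℚ}
    (h : MvPolynomial.eval (fun _ => (1:ℚ)) p ≠ 0) :
    algebraMap (MvPolynomial (Fin 2) ℚ) Kf p ≠ 0 := by
  intro h0
  apply h
  have hp : p = 0 := kf_inj (by rw [h0, map_zero])
  rw [hp, map_zero]

lemma rh_ne : rh ≠ 0 := by
  show algebraMap (MvPolynomial (Fin 2) ℚ) Kf (MvPolynomial.X 0) ≠ 0
  apply kf_poly_ne
  simp

lemma sh_ne : sh ≠ 0 := by
  show algebraMap (MvPolynomial (Fin 2) ℚ) Kf (MvPolynomial.X 1) ≠ 0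
  apply kf_poly_ne
  simp

lemma rr_ne : rr ≠ 0 := pow_ne_zero 2 rh_ne
lemma ss_ne : ss ≠ 0 := pow_ne_zero 2 sh_ne

lemma rrss_ne : rr + ss ≠ 0 := by
  have h : rr + ss = algebraMap (MvPolynomial (Fin 2) ℚ) Kf
      (MvPolynomial.X 0 ^ 2 + MvPolynomial.X 1 ^ 2) := by
    simp [rr, ss, rh, sh, map_add, map_pow]
  rw [h]
  apply kf_poly_ne
  norm_num

lemma two_ne : (2 : Kf) ≠ 0 := by
  have h : (2 : Kf) = algebraMap (MvPolynomial (Fin 2) ℚ) Kf 2 := by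
    rw [map_ofNat]
  rw [h]
  apply kf_poly_ne
  norm_num

/-- values of the structure constants. -/
lemma pr10 : pr 1 0 = ss := by unfold pr prH; norm_num [ss]
lemma pr01 : pr 0 1 = rr⁻¹ := by unfold pr prH; norm_num [rr, inv_pow]
lemma prH10 : prH 1 0 = sh := by unfold prH; norm_num
lemma prH01 : prH 0 1 = rh⁻¹ := by unfold prH; norm_num

lemma aC_zero {a b : ℤ} (h1 : a ≠ b) (h2 : (a-b).natAbs ≠ 1) : aC a b = 0 := by
  unfold aC; rw [if_neg h1, if_neg h2]

lemma aC_negone {a b : ℤ} (h2 : (a-b).natAbs = 1) : aC a b = -1 := by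
  unfold aC
  rw [if_neg, if_pos h2]
  intro hab
  rw [hab] at h2
  simp at h2

section AbstractRing

variable {K : Type} [Field K] {R : Type} [Ring R] [Algebra K R]

lemma a_smul_cancel {c : K} (hc : c ≠ 0) {x : R} (h : c • x = 0) : x = 0 := by
  have h2 := congrArg (fun z => c⁻¹ • z) h
  simpa [smul_smul, inv_mul_cancel₀ hc] using h2

lemma a_qbr_smul (q c : K) (x y : R) :
    x * (c • y) - q • ((c • y) * x) = c • (x * y - q • (y * x)) := by
  simp only [mul_smul_comm, smul_mul_assoc, smul_sub, smul_smul]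
  module

lemma a_pullL {x v : R} (h : x * v = v * x) (p q : K) (w : R) :
    x * (w * v - q • (v * w)) - p • ((w * v - q • (v * w)) * x)
      = (x * w - p • (w * x)) * v - q • (v * (x * w - p • (w * x))) := by
  have h1 : x * (v * w) = v * (x * w) := by rw [← mul_assoc, h, mul_assoc]
  simp only [mul_sub, sub_mul, smul_sub, smul_mul_assoc, mul_smul_comm, smul_smul,
    mul_assoc]
  rw [h1, ← h]
  module

lemma a_hi_eq (r s : K) (x y : R) :
    x * (x * y - s • (y * x)) - r • ((x * y - s • (y * x)) * x)
      = x*x*y - (r+s) • (x*y*x) + (r*s) • (y*x*x) := by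
  simp only [mul_sub, sub_mul, smul_sub, smul_mul_assoc, mul_smul_comm, smul_smul,
    mul_assoc]
  module

lemma a_hi_eq' (r s : K) (x y : R) :
    x * (x * y - r • (y * x)) - s • ((x * y - r • (y * x)) * x)
      = x*x*y - (r+s) • (x*y*x) + (r*s) • (y*x*x) := by
  simp only [mul_sub, sub_mul, smul_sub, smul_mul_assoc, mul_smul_comm, smul_smul,
    mul_assoc]
  module

lemma a_lo_key (r s : K) (hr : r ≠ 0) (hs : s ≠ 0) (A B C : R)
    (h : A - (r⁻¹ + s⁻¹) • B + (r*s)⁻¹ • C = 0) :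
    (r*s) • A - (r+s) • B + C = 0 := by
  have key : (r*s) • A - (r+s) • B + C = (r*s) • (A - (r⁻¹ + s⁻¹) • B + (r*s)⁻¹ • C) := by
    match_scalars <;> field_simp <;> ring
  rw [key, h, smul_zero]

lemma a_d7_key (sh rh : K) (hs : sh ≠ 0) (hr : rh ≠ 0) (u1 v0 v1 u0 : R)
    (h : u1*v0 - (sh^2)⁻¹ • (v0*u1) + (sh⁻¹*rh⁻¹) • (v1*u0 - (rh^2) • (u0*v1)) = 0) :
    v0*u1 - (sh^2) • (u1*v0) = (sh * rh⁻¹) • (v1*u0 - (rh^2) • (u0*v1)) := by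
  have key : v0*u1 - (sh^2) • (u1*v0) - (sh * rh⁻¹) • (v1*u0 - (rh^2) • (u0*v1))
      = (-(sh^2)) • (u1*v0 - (sh^2)⁻¹ • (v0*u1)
          + (sh⁻¹*rh⁻¹) • (v1*u0 - (rh^2) • (u0*v1))) := by
    match_scalars <;> field_simp <;> ring
  rw [h, smul_zero] at key
  exact sub_eq_zero.mp key

/-- the key combination for the inductive step of `P(m)`: a free-algebra identity. -/
lemma a_comb_P (r s : K) (hr : r ≠ 0) (g x T : R)
    (hQ : g*g*x - (r+s) • (g*x*g) + (r*s) • (x*g*g) = 0)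
    (hW : (g*x - s • (x*g)) * T - (r*s) • (T * (g*x - s • (x*g))) = 0) :
    (g*x - s • (x*g)) * (g*T - s • (T*g))
      - s • ((g*T - s • (T*g)) * (g*x - s • (x*g))) = 0 := by
  apply a_smul_cancel hr
  have key : r • ((g*x - s • (x*g)) * (g*T - s • (T*g))
        - s • ((g*T - s • (T*g)) * (g*x - s • (x*g))))
      = -((g*g*x - (r+s) • (g*x*g) + (r*s) • (x*g*g)) * T)
        + (r*s^2) • (T * (g*g*x - (r+s) • (g*x*g) + (r*s) • (x*g*g)))
        + g * ((g*x - s • (x*g)) * T - (r*s) • (T * (g*x - s • (x*g))))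
        - (r*s) • (((g*x - s • (x*g)) * T - (r*s) • (T * (g*x - s • (x*g)))) * g) := by
    simp only [mul_sub, sub_mul, mul_add, add_mul, smul_sub, smul_add,
      smul_mul_assoc, mul_smul_comm, smul_smul, mul_assoc, neg_sub, neg_add, neg_neg]
    module
  rw [key, hQ, hW]
  simp

/-- the key combination for `W(m)`. -/
lemma a_comb_W (r s : K) (hrs : r + s ≠ 0) (g x a : R) (hga : g * a = a * g)
    (hP : x*x*a - (r+s) • (x*a*x) + (r*s) • (a*x*x) = 0)
    (hR : (r*s) • (x*x*g) - (r+s) • (x*g*x) + g*x*x = 0) :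
    (g*x - s • (x*g)) * (x*a - r • (a*x))
      - (r*s) • ((x*a - r • (a*x)) * (g*x - s • (x*g))) = 0 := by
  apply a_smul_cancel hrs
  have hga' : ∀ z : R, g * (a * z) = a * (g * z) := fun z => by
    rw [← mul_assoc, hga, mul_assoc]
  have key : (r+s) • ((g*x - s • (x*g)) * (x*a - r • (a*x))
        - (r*s) • ((x*a - r • (a*x)) * (g*x - s • (x*g))))
      = r • (g * (x*x*a - (r+s) • (x*a*x) + (r*s) • (a*x*x)))
        - (r*s^2) • ((x*x*a - (r+s) • (x*a*x) + (r*s) • (a*x*x)) * g)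
        - (r^2*s) • (a * ((r*s) • (x*x*g) - (r+s) • (x*g*x) + g*x*x))
        + s • (((r*s) • (x*x*g) - (r+s) • (x*g*x) + g*x*x) * a) := by
    simp only [mul_sub, sub_mul, mul_add, add_mul, smul_sub, smul_add,
      smul_mul_assoc, mul_smul_comm, smul_smul, mul_assoc, hga, hga']
    module
  rw [key, hP, hR]
  simp

/-- the key combination for the inductive step of `R(m)`. -/
lemma a_comb_R (r s : K) (hr : r ≠ 0) (hrs : r + s ≠ 0) (g h y : R) (hgy : g * y = y * g)
    (hG2 : (r*s) • (h*h*g) - (r+s) • (h*g*h) + g*h*h = 0)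
    (hQ : h*h*y - (r+s) • (h*y*h) + (r*s) • (y*h*h) = 0)
    (hR1 : (r*s) • (y*y*h) - (r+s) • (y*h*y) + h*y*y = 0) :
    (r*s) • ((h*y - s • (y*h))*(h*y - s • (y*h))*g)
      - (r+s) • ((h*y - s • (y*h))*g*(h*y - s • (y*h)))
      + g*(h*y - s • (y*h))*(h*y - s • (y*h)) = 0 := by
  apply a_smul_cancel (mul_ne_zero hr hrs)
  have hgy' : ∀ z : R, g * (y * z) = y * (g * z) := fun z => by
    rw [← mul_assoc, hgy, mul_assoc]
  have key : (r*(r+s)) • ((r*s) • ((h*y - s • (y*h))*(h*y - s • (y*h))*g)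
        - (r+s) • ((h*y - s • (y*h))*g*(h*y - s • (y*h)))
        + g*(h*y - s • (y*h))*(h*y - s • (y*h)))
      = (r^2*s^3) • (y*y*((r*s) • (h*h*g) - (r+s) • (h*g*h) + g*h*h))
        - (r*s*(r+s)) • (y*((r*s) • (h*h*g) - (r+s) • (h*g*h) + g*h*h)*y)
        + r • (((r*s) • (h*h*g) - (r+s) • (h*g*h) + g*h*h)*y*y)
        - (r*s^2) • (g*y*(h*h*y - (r+s) • (h*y*h) + (r*s) • (y*h*h)))
        + s • (g*(h*h*y - (r+s) • (h*y*h) + (r*s) • (y*h*h))*y)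
        - (r^2*s^3) • (y*(h*h*y - (r+s) • (h*y*h) + (r*s) • (y*h*h))*g)
        + (r*s^2) • ((h*h*y - (r+s) • (h*y*h) + (r*s) • (y*h*h))*g*y)
        + (r*(r+s)) • (h*g*((r*s) • (y*y*h) - (r+s) • (y*h*y) + h*y*y))
        - (r+s) • (g*h*((r*s) • (y*y*h) - (r+s) • (y*h*y) + h*y*y))
        - (r*s*(r+s)) • (h*((r*s) • (y*y*h) - (r+s) • (y*h*y) + h*y*y)*g)
        + (r*s^2*(r+s)) • (((r*s) • (y*y*h) - (r+s) • (y*h*y) + h*y*y)*g*h) := by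
    simp only [mul_sub, sub_mul, mul_add, add_mul, smul_sub, smul_add,
      smul_mul_assoc, mul_smul_comm, smul_smul, mul_assoc, hgy, hgy']
    module
  rw [key, hG2, hQ, hR1]
  simp

end AbstractRing

section ConcreteQbr

variable {R : Type} [Ring R] [Algebra Kf R]

lemma qbr_zero_left (q : Kf) (y : R) : qbr q 0 y = 0 := by
  simp [qbr]

lemma qbr_smul_right (q c : Kf) (x y : R) : qbr q x (c • y) = c • qbr q x y :=
  a_qbr_smul q c x y

lemma pullL {x v : R} (h : x * v = v * x) (p q : Kf) (w : R) :
    qbr p x (qbr q w v) = qbr q (qbr p x w) v :=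
  a_pullL h p q w

lemma comm_qbr {x u v : R} (hu : x*u = u*x) (hv : x*v = v*x) (q : Kf) :
    x * qbr q u v = qbr q u v * x := by
  have h1 : x*(u*v) = (u*v)*x := by rw [← mul_assoc, hu, mul_assoc, hv, ← mul_assoc]
  have h2 : x*(v*u) = (v*u)*x := by rw [← mul_assoc, hv, mul_assoc, hu, ← mul_assoc]
  simp only [qbr, mul_sub, sub_mul, mul_smul_comm, smul_mul_assoc, h1, h2]

lemma qbr_hi_eq (x y : R) : qbr rr x (qbr ss x y)
    = x*x*y - (rr+ss) • (x*y*x) + (rr*ss) • (y*x*x) :=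
  a_hi_eq rr ss x y

lemma qbr_hi_eq' (x y : R) : qbr ss x (qbr rr x y)
    = x*x*y - (rr+ss) • (x*y*x) + (rr*ss) • (y*x*x) :=
  a_hi_eq' rr ss x y

lemma comb_P (g x T : R)
    (hQ : g*g*x - (rr+ss) • (g*x*g) + (rr*ss) • (x*g*g) = 0)
    (hW : qbr (rr*ss) (qbr ss g x) T = 0) :
    qbr ss (qbr ss g x) (qbr ss g T) = 0 :=
  a_comb_P rr ss rr_ne g x T hQ hW

lemma comb_W (g x a : R) (hga : g * a = a * g)
    (hP : x*x*a - (rr+ss) • (x*a*x) + (rr*ss) • (a*x*x) = 0)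
    (hR : (rr*ss) • (x*x*g) - (rr+ss) • (x*g*x) + g*x*x = 0) :
    qbr (rr*ss) (qbr ss g x) (qbr rr x a) = 0 :=
  a_comb_W rr ss rrss_ne g x a hga hP hR

lemma comb_R (g h y : R) (hgy : g * y = y * g)
    (hG2 : (rr*ss) • (h*h*g) - (rr+ss) • (h*g*h) + g*h*h = 0)
    (hQ : h*h*y - (rr+ss) • (h*y*h) + (rr*ss) • (y*h*h) = 0)
    (hR1 : (rr*ss) • (y*y*h) - (rr+ss) • (y*h*y) + h*y*y = 0) :
    (rr*ss) • ((qbr ss h y)*(qbr ss h y)*g) - (rr+ss) • ((qbr ss h y)*g*(qbr ss h y))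
      + g*(qbr ss h y)*(qbr ss h y) = 0 :=
  a_comb_R rr ss rr_ne rrss_ne g h y hgy hG2 hQ hR1

end ConcreteQbr

section InDU

variable (n : ℕ)

open DU

lemma mkrel {a b : Dpre.FD n} (hab : DRel n a b) : DU.mk n a = DU.mk n b := by
  unfold DU.mk
  exact RingQuot.mkAlgHom_rel Kf hab

lemma mk_XM (i : Fin (n-1)) (k : ℤ) : DU.mk n (Dpre.XM n i k) = uxm n i k := rfl

lemma uxm_comm (i j : Fin (n-1)) (hC : aC i j = 0) (k k' : ℤ) :
    uxm n i k * uxm n j k' = uxm n j k' * uxm n i k := by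
  have h := mkrel n (DRel.d91m i j hC k k')
  simpa only [map_mul, mk_XM] using h

lemma uxm_serre_hi (i j : Fin (n-1)) (hC : aC i j = -1) (hij : (j:ℕ) < i) (m k : ℤ) :
    uxm n i m * uxm n i m * uxm n j k - (rr+ss) • (uxm n i m * uxm n j k * uxm n i m)
      + (rr*ss) • (uxm n j k * uxm n i m * uxm n i m) = 0 := by
  have h := mkrel n (DRel.d93m i j hC hij m m k)
  simp only [map_add, map_sub, map_smul, map_mul, map_zero, mk_XM, ← mul_assoc] at h
  have h2 : (2:Kf) • (uxm n i m * uxm n i m * uxm n j k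
      - (rr+ss) • (uxm n i m * uxm n j k * uxm n i m)
      + (rr*ss) • (uxm n j k * uxm n i m * uxm n i m)) = 0 := by
    rw [two_smul]; exact h
  exact a_smul_cancel (K := Kf) (R := DU n) two_ne h2

lemma uxm_serre_lo (i j : Fin (n-1)) (hC : aC i j = -1) (hij : (i:ℕ) < j) (m k : ℤ) :
    (rr*ss) • (uxm n i m * uxm n i m * uxm n j k)
      - (rr+ss) • (uxm n i m * uxm n j k * uxm n i m)
      + uxm n j k * uxm n i m * uxm n i m = 0 := by
  have h := mkrel n (DRel.d92m i j hC hij m m k)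
  simp only [map_add, map_sub, map_smul, map_mul, map_zero, mk_XM, ← mul_assoc] at h
  have h2 : (2:Kf) • (uxm n i m * uxm n i m * uxm n j k
      - (rr⁻¹+ss⁻¹) • (uxm n i m * uxm n j k * uxm n i m)
      + (rr*ss)⁻¹ • (uxm n j k * uxm n i m * uxm n i m)) = 0 := by
    rw [two_smul]; exact h
  exact a_lo_key (R := DU n) rr ss rr_ne ss_ne _ _ _ (a_smul_cancel (K := Kf) (R := DU n) two_ne h2)

lemma xmg_comm (t u : ℕ) (k k' : ℤ) (hd : t + 2 ≤ u ∨ u + 2 ≤ t) :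
    xmg n t k * xmg n u k' = xmg n u k' * xmg n t k := by
  unfold DU.xmg
  by_cases h1 : 1 ≤ t ∧ t - 1 < n - 1
  · by_cases h2 : 1 ≤ u ∧ u - 1 < n - 1
    · rw [dif_pos h1, dif_pos h2]
      refine uxm_comm n ⟨t-1, h1.2⟩ ⟨u-1, h2.2⟩ (aC_zero ?_ ?_) k k'
      · show ((t-1 : ℕ) : ℤ) ≠ ((u-1 : ℕ) : ℤ)
        omega
      · show (((t-1 : ℕ) : ℤ) - ((u-1 : ℕ) : ℤ)).natAbs ≠ 1
        omega
    · rw [dif_neg h2]; simp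
  · rw [dif_neg h1]; simp

lemma xmg_serre_hi (t : ℕ) (ht : 2 ≤ t) (htn : t < n) (m k : ℤ) :
    xmg n t m * xmg n t m * xmg n (t-1) k
      - (rr+ss) • (xmg n t m * xmg n (t-1) k * xmg n t m)
      + (rr*ss) • (xmg n (t-1) k * xmg n t m * xmg n t m) = 0 := by
  have hA : 1 ≤ t ∧ t - 1 < n - 1 := ⟨by omega, by omega⟩
  have hB : 1 ≤ t-1 ∧ t - 1 - 1 < n - 1 := ⟨by omega, by omega⟩
  unfold DU.xmg
  rw [dif_pos hA, dif_pos hB]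
  refine uxm_serre_hi n ⟨t-1, hA.2⟩ ⟨t-1-1, hB.2⟩ (aC_negone ?_) ?_ m k
  · show (((t-1 : ℕ) : ℤ) - ((t-1-1 : ℕ) : ℤ)).natAbs = 1
    omega
  · show t-1-1 < t-1
    omega

lemma xmg_serre_lo (t : ℕ) (ht : 1 ≤ t) (htn : t + 1 < n) (m k : ℤ) :
    (rr*ss) • (xmg n t m * xmg n t m * xmg n (t+1) k)
      - (rr+ss) • (xmg n t m * xmg n (t+1) k * xmg n t m)
      + xmg n (t+1) k * xmg n t m * xmg n t m = 0 := by
  have hA : 1 ≤ t ∧ t - 1 < n - 1 := ⟨by omega, by omega⟩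
  have hB : 1 ≤ t+1 ∧ t + 1 - 1 < n - 1 := ⟨by omega, by omega⟩
  unfold DU.xmg
  rw [dif_pos hA, dif_pos hB]
  refine uxm_serre_lo n ⟨t-1, hA.2⟩ ⟨t+1-1, hB.2⟩ (aC_negone ?_) ?_ m k
  · show (((t-1 : ℕ) : ℤ) - ((t+1-1 : ℕ) : ℤ)).natAbs = 1
    omega
  · show t-1 < t+1-1
    omega

lemma xmg_d7 (hn : 2 < n) :
    qbr ss (xmg n 2 0) (xmg n 1 1) = (sh * rh⁻¹) • qbr rr (xmg n 2 1) (xmg n 1 0) := by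
  have h0 : (0:ℕ) < n - 1 := by omega
  have h1 : (1:ℕ) < n - 1 := by omega
  have hA : (1:ℕ) ≤ 1 ∧ 1 - 1 < n - 1 := ⟨le_refl _, by omega⟩
  have hB : (1:ℕ) ≤ 2 ∧ 2 - 1 < n - 1 := ⟨by omega, by omega⟩
  have e10 : xmg n 1 (0:ℤ) = uxm n ⟨0, h0⟩ 0 := by unfold DU.xmg; rw [dif_pos hA]
  have e11 : xmg n 1 (1:ℤ) = uxm n ⟨0, h0⟩ 1 := by unfold DU.xmg; rw [dif_pos hA]
  have e20 : xmg n 2 (0:ℤ) = uxm n ⟨1, h1⟩ 0 := by unfold DU.xmg; rw [dif_pos hB]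
  have e21 : xmg n 2 (1:ℤ) = uxm n ⟨1, h1⟩ 1 := by unfold DU.xmg; rw [dif_pos hB]
  rw [e10, e11, e20, e21]
  have h := mkrel n (DRel.d7m ⟨0, h0⟩ ⟨1, h1⟩ 0 0)
  simp only [map_add, map_sub, map_smul, map_mul, map_zero, mk_XM, zero_add,
    Fin.val_mk, Nat.cast_zero, Nat.cast_one, pr10, pr01, prH10, prH01, inv_inv] at h
  exact a_d7_key sh rh sh_ne rh_ne _ _ _ _ h

end InDU

section MainInduction

variable (n : ℕ)

open DU

lemma A3 : DU.xRootM n 2 1 3 = xmg n 2 1 := rfl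

lemma B3 : DU.xRootM n 1 1 3 = qbr ss (xmg n 2 0) (xmg n 1 1) := rfl

lemma A_succ (m : ℕ) (hm : 3 ≤ m) :
    DU.xRootM n 2 1 (m+1) = qbr ss (xmg n m 0) (DU.xRootM n 2 1 m) := by
  simp only [DU.xRootM, nestR]
  rw [if_neg (by omega : ¬ m ≤ 2), if_neg (by omega : ¬ m = 2)]

lemma B_succ (m : ℕ) (hm : 2 ≤ m) :
    DU.xRootM n 1 1 (m+1) = qbr ss (xmg n m 0) (DU.xRootM n 1 1 m) := by
  simp only [DU.xRootM, nestR]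
  rw [if_neg (by omega : ¬ m ≤ 1), if_neg (by omega : ¬ m = 1)]

lemma gA_comm (t m : ℕ) (hm : 3 ≤ m) (k : ℤ) : m + 1 ≤ t →
    xmg n t k * DU.xRootM n 2 1 m = DU.xRootM n 2 1 m * xmg n t k := by
  induction m, hm using Nat.le_induction with
  | base =>
    intro hmt
    rw [A3]
    exact xmg_comm n t 2 k 1 (Or.inr (by omega))
  | succ m hm ih =>
    intro hmt
    rw [A_succ n m hm]
    exact comm_qbr (xmg_comm n t m k 0 (Or.inr (by omega))) (ih (by omega)) ss

lemma LQ (m : ℕ) (hm : 3 ≤ m) (hmn : m < n) :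
    qbr rr (xmg n m 0) (qbr ss (xmg n m 0) (DU.xRootM n 2 1 m)) = 0 := by
  rcases Nat.eq_or_lt_of_le hm with h3 | h4
  · subst h3
    rw [A3, qbr_hi_eq]
    have e := xmg_serre_hi n 3 (by omega) (by omega) 0 1
    norm_num at e
    exact e
  · obtain ⟨m', rfl⟩ : ∃ m', m = m' + 1 := ⟨m-1, by omega⟩
    have hm' : 3 ≤ m' := by omega
    rw [A_succ n m' hm']
    rw [pullL (gA_comm n (m'+1) m' hm' 0 (le_refl _)) ss ss]
    rw [pullL (gA_comm n (m'+1) m' hm' 0 (le_refl _)) rr ss]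
    have hs : qbr rr (xmg n (m'+1) 0) (qbr ss (xmg n (m'+1) 0) (xmg n m' 0)) = 0 := by
      rw [qbr_hi_eq]
      have e := xmg_serre_hi n (m'+1) (by omega) (by omega) 0 0
      simpa using e
    rw [hs, qbr_zero_left]

lemma LR (m : ℕ) (hm : 3 ≤ m) : m < n →
    (rr*ss) • (DU.xRootM n 2 1 m * DU.xRootM n 2 1 m * xmg n m 0)
      - (rr+ss) • (DU.xRootM n 2 1 m * xmg n m 0 * DU.xRootM n 2 1 m)
      + xmg n m 0 * DU.xRootM n 2 1 m * DU.xRootM n 2 1 m = 0 := by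
  induction m, hm using Nat.le_induction with
  | base =>
    intro h3n
    rw [A3]
    have e := xmg_serre_lo n 2 (by omega) (by omega) 1 0
    norm_num at e
    exact e
  | succ m hm ih =>
    intro hmn
    rw [A_succ n m hm]
    refine comb_R _ _ _ (gA_comm n (m+1) m hm 0 (le_refl _)) ?_ ?_ (ih (by omega))
    · exact xmg_serre_lo n m (by omega) (by omega) 0 0
    · have e := LQ n m hm (by omega)
      rw [qbr_hi_eq] at e
      exact e

lemma LP (m : ℕ) (hm : 3 ≤ m) : m ≤ n →
    qbr ss (DU.xRootM n 2 1 m) (qbr rr (DU.xRootM n 2 1 m) (xmg n 1 0)) = 0 := by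
  induction m, hm using Nat.le_induction with
  | base =>
    intro h3n
    rw [A3, qbr_hi_eq']
    have e := xmg_serre_hi n 2 (by omega) (by omega) 1 0
    norm_num at e
    exact e
  | succ m hm ih =>
    intro hmn
    have hWm : qbr (rr*ss) (qbr ss (xmg n m 0) (DU.xRootM n 2 1 m))
        (qbr rr (DU.xRootM n 2 1 m) (xmg n 1 0)) = 0 := by
      refine comb_W _ _ _ (xmg_comm n m 1 0 0 (Or.inr (by omega))) ?_ ?_
      · have e := ih (by omega)
        rw [qbr_hi_eq'] at e
        exact e
      · exact LR n m hm (by omega)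
    have h1 : qbr ss (qbr ss (xmg n m 0) (DU.xRootM n 2 1 m))
        (qbr ss (xmg n m 0) (qbr rr (DU.xRootM n 2 1 m) (xmg n 1 0))) = 0 := by
      refine comb_P _ _ _ ?_ hWm
      have e := LQ n m hm (by omega)
      rw [qbr_hi_eq] at e
      exact e
    rw [pullL (xmg_comm n m 1 0 0 (Or.inr (by omega))) ss rr] at h1
    rw [← A_succ n m hm] at h1
    exact h1

lemma LB (m : ℕ) (hm : 3 ≤ m) : m ≤ n →
    DU.xRootM n 1 1 m = (sh * rh⁻¹) • qbr rr (DU.xRootM n 2 1 m) (xmg n 1 0) := by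
  induction m, hm using Nat.le_induction with
  | base =>
    intro h3n
    rw [B3, A3]
    exact xmg_d7 n (by omega)
  | succ m hm ih =>
    intro hmn
    rw [B_succ n m (by omega), ih (by omega), qbr_smul_right,
      pullL (xmg_comm n m 1 0 0 (Or.inr (by omega))) ss rr, ← A_succ n m hm]

end MainInduction

end Stmt19Aux

open DU in
/-- Claim (C): `[x^-_{α_{2n}}(1), x^-_{α_{1n}}(1)]_s = 0` in `𝒰` for `n > 2`. -/
theorem stmt19 (n : ℕ) (hn : 2 < n) :
    qbr ss (xRootM n 2 1 n) (xRootM n 1 1 n) = 0 := by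
  rw [LB n n (by omega) (le_refl n), qbr_smul_right,
    LP n n (by omega) (le_refl n), smul_zero]
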